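/- For n = 3 (N = {1,2,3}), the NPB Active Player Draft mechanism satisfies CE-efficiency (its output at every profile ≻ is a derangement that is CE-efficient at ≻) and strategy-proofness. -/
import Mathlib


open scoped Classical

/-- Each division has a strict linear (total) preference order over workers. -/
def StrictProfile {α : Type*} (pref : α → α → α → Prop) : Prop :=
  ∀ i, IsStrictTotalOrder α (pref i)

/-- `pref'` is an improvement for division `i` with respect to `pref`. -/
def Improvement {α : Type*} (pref pref' : α → α → α → Prop) (i : α) : Prop :=
  pref' i = pref i ∧
  (∀ j, j ≠ i → ∀ k, k ≠ i → pref j i k → pref' j i k) ∧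
  (∀ j, j ≠ i → ∀ k, k ≠ i → ∀ l, l ≠ i → (pref j k l ↔ pref' j k l))

/-- The `r`-maximum element of the finite set `s` (chosen via Hilbert choice):
the element of `s` that `r`-beats every other element of `s`. -/
noncomputable def pick {α : Type*} [Nonempty α] (r : α → α → Prop) (s : Finset α) : α :=
  Classical.epsilon fun m => m ∈ s ∧ ∀ x ∈ s, x ≠ m → r m x

/-- `μ` is CE-efficient at `pref`: no derangement (complete-exchange assignment)
`μ'` weakly improves every division and strictly improves some division. -/
def CEEfficientAt {α : Type*} (pref : α → α → α → Prop) (μ : α → α) : Prop :=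
  ¬ ∃ μ' : α → α, Function.Bijective μ' ∧ (∀ i, μ' i ≠ i) ∧
      (∀ i, μ' i = μ i ∨ pref i (μ' i) (μ i)) ∧ (∃ j, pref j (μ' j) (μ j))

/-- An arbitrary element of `s` (via choice); used for the last-two rule where the
relevant set is a singleton. -/
noncomputable def theElem {α : Type*} [Nonempty α] (s : Finset α) : α :=
  Classical.epsilon (· ∈ s)

/-- One selection step of the NPB Active Player Draft.  `cur` is the club whose turn
it is, `R` the clubs without a selection yet (including `cur`), `A` the available
players, `μ` the partial assignment.  If exactly two clubs remain, `cur` must select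
the other remaining club's listed player (last-two rule); otherwise if `cur`'s voted
player is available it must select it (vote-binding); otherwise it selects its most
preferred available player other than its own.  The next mover is the owner of the
selected player if that club has not yet selected (owner-call), and otherwise the
draft-priority-maximal club without a selection (fallback). -/
noncomputable def npbStep {n : ℕ} [NeZero n] (pref : Fin n → Fin n → Fin n → Prop)
    (dprio : Fin n → Fin n → Prop) (vote : Fin n → Fin n) :
    ℕ → Fin n → Finset (Fin n) → Finset (Fin n) → (Fin n → Fin n) → (Fin n → Fin n)
  | 0, _, _, _, μ => μ
  | fuel + 1, cur, R, A, μ =>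
    let w : Fin n :=
      if R.card = 2 then theElem (R.erase cur)
      else if vote cur ∈ A then vote cur
      else pick (pref cur) (A.erase cur)
    let R' := R.erase cur
    let next := if w ∈ R' then w else pick dprio R'
    npbStep pref dprio vote fuel next R' (A.erase w) (Function.update μ cur w)

/-- The NPB Active Player Draft mechanism on clubs `{1, …, n}` (identified with
`Fin n`, each club listing its own player) with exogenous tie-break order
`1 ▷ 2 ▷ ⋯ ▷ n`.  Each club votes for its most preferred player other than its own;
the draft-priority ranks clubs by the number of votes their listed player received,
ties broken by the exogenous order; then clubs select sequentially starting from the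
draft-priority-maximal club. -/
noncomputable def npb {n : ℕ} [NeZero n]
    (pref : Fin n → Fin n → Fin n → Prop) : Fin n → Fin n :=
  let vote : Fin n → Fin n := fun i => pick (pref i) (Finset.univ.erase i)
  let votes : Fin n → ℕ := fun c => (Finset.univ.filter fun i => vote i = c).card
  let dprio : Fin n → Fin n → Prop :=
    fun i j => votes j < votes i ∨ (votes i = votes j ∧ i < j)
  npbStep pref dprio vote n (pick dprio Finset.univ) Finset.univ Finset.univ
    (fun a => a)

section Aux

variable {α : Type*} [Nonempty α]

lemma pick_spec' (r : α → α → Prop) (s : Finset α)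
    (h : ∃ m, m ∈ s ∧ ∀ x ∈ s, x ≠ m → r m x) :
    pick r s ∈ s ∧ ∀ x ∈ s, x ≠ pick r s → r (pick r s) x :=
  Classical.epsilon_spec h

lemma pick_eq {r : α → α → Prop} {s : Finset α} {m : α}
    (hasym : ∀ a b, r a b → ¬ r b a)
    (hm : m ∈ s) (hmax : ∀ x ∈ s, x ≠ m → r m x) : pick r s = m := by
  obtain ⟨h1, h2⟩ := pick_spec' r s ⟨m, hm, hmax⟩
  by_contra hne
  exact hasym _ _ (h2 m hm fun h => hne h.symm) (hmax _ h1 hne)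

lemma pick_singleton (r : α → α → Prop) (a : α) : pick r {a} = a := by
  have := (pick_spec' r {a} ⟨a, Finset.mem_singleton_self a, by simp⟩).1
  simpa using this

lemma theElem_singleton (a : α) : theElem ({a} : Finset α) = a := by
  have : theElem ({a} : Finset α) ∈ ({a} : Finset α) :=
    Classical.epsilon_spec ⟨a, Finset.mem_singleton_self a⟩
  simpa using this

end Aux

section Steps

variable {n : ℕ} [NeZero n] (pref : Fin n → Fin n → Fin n → Prop)
  (dprio : Fin n → Fin n → Prop) (vote : Fin n → Fin n)

lemma npbStep_vote (fuel : ℕ) (cur : Fin n) (R A : Finset (Fin n)) (μ : Fin n → Fin n)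
    (h2 : R.card ≠ 2) (hm : vote cur ∈ A) (hR : vote cur ∈ R.erase cur) :
    npbStep pref dprio vote (fuel + 1) cur R A μ =
      npbStep pref dprio vote fuel (vote cur) (R.erase cur) (A.erase (vote cur))
        (Function.update μ cur (vote cur)) := by
  simp only [npbStep, if_neg h2, if_pos hm, if_pos hR]

lemma npbStep_two (fuel : ℕ) (cur : Fin n) (R A : Finset (Fin n)) (μ : Fin n → Fin n)
    (w : Fin n) (h2 : R.card = 2) (hw : R.erase cur = {w}) :
    npbStep pref dprio vote (fuel + 1) cur R A μ =
      npbStep pref dprio vote fuel w {w} (A.erase w) (Function.update μ cur w) := by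
  simp only [npbStep, if_pos h2, hw, theElem_singleton, Finset.mem_singleton, if_pos rfl, if_true]

lemma npbStep_force (cur : Fin n) (R A : Finset (Fin n)) (μ : Fin n → Fin n) (g : Fin n)
    (h2 : R.card ≠ 2) (hA : A = {g}) (hg : g ≠ cur) :
    npbStep pref dprio vote 1 cur R A μ = Function.update μ cur g := by
  subst hA
  by_cases h : vote cur = g
  · simp only [npbStep, if_neg h2, Finset.mem_singleton, if_pos h, h, if_true]
  · have hv : vote cur ∉ ({g} : Finset (Fin n)) := by simp [h]
    have herase : ({g} : Finset (Fin n)).erase cur = {g} :=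
      Finset.erase_eq_self.mpr (by simpa using hg.symm)
    simp only [npbStep, if_neg h2, if_neg hv, herase, pick_singleton]

end Steps
noncomputable def nvote (pref : Fin 3 → Fin 3 → Fin 3 → Prop) : Fin 3 → Fin 3 :=
  fun i => pick (pref i) (Finset.univ.erase i)

noncomputable def nvotes (pref : Fin 3 → Fin 3 → Fin 3 → Prop) : Fin 3 → ℕ :=
  fun c => (Finset.univ.filter fun i => nvote pref i = c).card

noncomputable def ndprio (pref : Fin 3 → Fin 3 → Fin 3 → Prop) : Fin 3 → Fin 3 → Prop :=
  fun i j => nvotes pref j < nvotes pref i ∨ (nvotes pref i = nvotes pref j ∧ i < j)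

lemma nvote_spec (pref : Fin 3 → Fin 3 → Fin 3 → Prop) (hp : StrictProfile pref) (i : Fin 3) :
    nvote pref i ≠ i ∧ ∀ x, x ≠ i → x ≠ nvote pref i → pref i (nvote pref i) x := by
  haveI := hp i
  have htr : ∀ a b : Fin 3, a ≠ b → pref i a b ∨ pref i b a := by
    intro a b hab
    rcases trichotomous_of (pref i) a b with h | h | h
    exacts [Or.inl h, absurd h hab, Or.inr h]
  have hex : ∃ m, m ∈ Finset.univ.erase i ∧ ∀ x ∈ Finset.univ.erase i, x ≠ m → pref i m x := by
    obtain ⟨a, b, hab, hset⟩ : ∃ a b : Fin 3, a ≠ b ∧ Finset.univ.erase i = {a, b} := by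
      fin_cases i
      · exact ⟨1, 2, by decide, by decide⟩
      · exact ⟨0, 2, by decide, by decide⟩
      · exact ⟨0, 1, by decide, by decide⟩
    rcases htr a b hab with h | h
    · refine ⟨a, by simp [hset], ?_⟩
      intro x hx hxa
      rw [hset, Finset.mem_insert, Finset.mem_singleton] at hx
      rcases hx with rfl | rfl
      · exact absurd rfl hxa
      · exact h
    · refine ⟨b, by simp [hset], ?_⟩
      intro x hx hxb
      rw [hset, Finset.mem_insert, Finset.mem_singleton] at hx
      rcases hx with rfl | rfl
      · exact h
      · exact absurd rfl hxb
  have hs := pick_spec' (pref i) (Finset.univ.erase i) hex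
  constructor
  · have := hs.1
    rw [Finset.mem_erase] at this
    exact this.1
  · intro x hx hxv
    exact hs.2 x (by simp [hx]) hxv

lemma npref_asymm (pref : Fin 3 → Fin 3 → Fin 3 → Prop) (hp : StrictProfile pref)
    (i : Fin 3) : ∀ a b, pref i a b → ¬ pref i b a := by
  haveI := hp i
  intro a b h1 h2
  exact irrefl_of (pref i) a (trans_of (pref i) h1 h2)

lemma ndprio_asymm (pref : Fin 3 → Fin 3 → Fin 3 → Prop) :
    ∀ a b, ndprio pref a b → ¬ ndprio pref b a := by
  intro a b h1 h2
  rcases h1 with h1 | ⟨h1, h1'⟩ <;> rcases h2 with h2 | ⟨h2, h2'⟩ <;>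
    first
      | omega
      | exact absurd (h1'.trans h2') (lt_irrefl _)
lemma npb_closed (pref : Fin 3 → Fin 3 → Fin 3 → Prop) (hp : StrictProfile pref)
    (f v t : Fin 3)
    (hf : pick (ndprio pref) Finset.univ = f) (hv : nvote pref f = v)
    (hvf : v ≠ f) (htf : t ≠ f) (htv : t ≠ v) :
    npb pref f = v ∧ npb pref v = t ∧ npb pref t = f := by
  have h3 : npb pref = npbStep pref (ndprio pref) (nvote pref) (1 + 1 + 1)
      (pick (ndprio pref) Finset.univ) Finset.univ Finset.univ (fun a => a) := rfl
  rw [h3, hf]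
  have hcase : ∀ f v t : Fin 3, v ≠ f → t ≠ f → t ≠ v →
      (f = 0 ∧ v = 1 ∧ t = 2) ∨ (f = 0 ∧ v = 2 ∧ t = 1) ∨ (f = 1 ∧ v = 0 ∧ t = 2) ∨
      (f = 1 ∧ v = 2 ∧ t = 0) ∨ (f = 2 ∧ v = 0 ∧ t = 1) ∨ (f = 2 ∧ v = 1 ∧ t = 0) := by
    decide
  rcases hcase f v t hvf htf htv with hc | hc | hc | hc | hc | hc
  · obtain ⟨rfl, rfl, rfl⟩ := hc
    rw [npbStep_vote _ _ _ _ _ _ _ _ (by decide) (Finset.mem_univ _) (by rw [hv]; decide), hv,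
      npbStep_two _ _ _ _ _ _ _ _ 2 (by decide) (by decide),
      npbStep_force _ _ _ _ _ _ _ 0 (by decide) (by decide) (by decide)]
    exact ⟨by decide, by decide, by decide⟩
  · obtain ⟨rfl, rfl, rfl⟩ := hc
    rw [npbStep_vote _ _ _ _ _ _ _ _ (by decide) (Finset.mem_univ _) (by rw [hv]; decide), hv,
      npbStep_two _ _ _ _ _ _ _ _ 1 (by decide) (by decide),
      npbStep_force _ _ _ _ _ _ _ 0 (by decide) (by decide) (by decide)]
    exact ⟨by decide, by decide, by decide⟩
  · obtain ⟨rfl, rfl, rfl⟩ := hc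
    rw [npbStep_vote _ _ _ _ _ _ _ _ (by decide) (Finset.mem_univ _) (by rw [hv]; decide), hv,
      npbStep_two _ _ _ _ _ _ _ _ 2 (by decide) (by decide),
      npbStep_force _ _ _ _ _ _ _ 1 (by decide) (by decide) (by decide)]
    exact ⟨by decide, by decide, by decide⟩
  · obtain ⟨rfl, rfl, rfl⟩ := hc
    rw [npbStep_vote _ _ _ _ _ _ _ _ (by decide) (Finset.mem_univ _) (by rw [hv]; decide), hv,
      npbStep_two _ _ _ _ _ _ _ _ 0 (by decide) (by decide),
      npbStep_force _ _ _ _ _ _ _ 1 (by decide) (by decide) (by decide)]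
    exact ⟨by decide, by decide, by decide⟩
  · obtain ⟨rfl, rfl, rfl⟩ := hc
    rw [npbStep_vote _ _ _ _ _ _ _ _ (by decide) (Finset.mem_univ _) (by rw [hv]; decide), hv,
      npbStep_two _ _ _ _ _ _ _ _ 1 (by decide) (by decide),
      npbStep_force _ _ _ _ _ _ _ 2 (by decide) (by decide) (by decide)]
    exact ⟨by decide, by decide, by decide⟩
  · obtain ⟨rfl, rfl, rfl⟩ := hc
    rw [npbStep_vote _ _ _ _ _ _ _ _ (by decide) (Finset.mem_univ _) (by rw [hv]; decide), hv,
      npbStep_two _ _ _ _ _ _ _ _ 0 (by decide) (by decide),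
      npbStep_force _ _ _ _ _ _ _ 2 (by decide) (by decide) (by decide)]
    exact ⟨by decide, by decide, by decide⟩
lemma npb_part1 (pref : Fin 3 → Fin 3 → Fin 3 → Prop) (hp : StrictProfile pref) :
    Function.Bijective (npb pref) ∧ (∀ i, npb pref i ≠ i) ∧
      CEEfficientAt pref (npb pref) := by
  obtain ⟨f, hf⟩ : ∃ f, pick (ndprio pref) Finset.univ = f := ⟨_, rfl⟩
  obtain ⟨v, hv⟩ : ∃ v, nvote pref f = v := ⟨_, rfl⟩
  have hvf : v ≠ f := hv ▸ (nvote_spec pref hp f).1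
  obtain ⟨t, htf, htv⟩ : ∃ t : Fin 3, t ≠ f ∧ t ≠ v := by
    have h : ∀ f v : Fin 3, v ≠ f → ∃ t : Fin 3, t ≠ f ∧ t ≠ v := by decide
    exact h f v hvf
  obtain ⟨e1, e2, e3⟩ := npb_closed pref hp f v t hf hv hvf htf htv
  have hall : ∀ i : Fin 3, i = f ∨ i = v ∨ i = t := by
    have h : ∀ f v t : Fin 3, v ≠ f → t ≠ f → t ≠ v → ∀ i : Fin 3, i = f ∨ i = v ∨ i = t := by
      decide
    exact h f v t hvf htf htv
  have hinj : Function.Injective (npb pref) := by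
    intro a b hab
    rcases hall a with rfl | rfl | rfl <;> rcases hall b with rfl | rfl | rfl <;>
      simp only [e1, e2, e3] at hab <;>
      first
        | rfl
        | exact absurd hab htv
        | exact absurd hab (Ne.symm htv)
        | exact absurd hab htf
        | exact absurd hab (Ne.symm htf)
        | exact absurd hab hvf
        | exact absurd hab (Ne.symm hvf)
  refine ⟨hinj.bijective_of_finite, ?_, ?_⟩
  · intro i
    rcases hall i with rfl | rfl | rfl
    · rw [e1]; exact hvf
    · rw [e2]; exact htv
    · rw [e3]; exact Ne.symm htf
  · rintro ⟨μ', ⟨hinj', -⟩, hder', hweak, j, hstr⟩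
    have hμf : μ' f = v := by
      rcases hall (μ' f) with h | h | h
      · exact absurd h (hder' f)
      · exact h
      · exfalso
        rcases hweak f with h' | h'
        · rw [e1] at h'; rw [h] at h'; exact htv h'
        · rw [e1, h] at h'
          have hft : pref f v t := by
            have := (nvote_spec pref hp f).2 t htf
            rw [hv] at this
            exact this htv
          exact npref_asymm pref hp f v t hft h'
    have hμv : μ' v = t := by
      rcases hall (μ' v) with h | h | h
      · exfalso
        rcases hall (μ' t) with h2 | h2 | h2
        · exact htv (hinj' (h2.trans h.symm))
        · exact htf (hinj' (h2.trans hμf.symm))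
        · exact hder' t h2
      · exact absurd h (hder' v)
      · exact h
    have hμt : μ' t = f := by
      rcases hall (μ' t) with h | h | h
      · exact h
      · exact absurd (hinj' (h.trans hμf.symm)) htf
      · exact absurd h (hder' t)
    rcases hall j with h | h | h
    · rw [h, hμf, e1] at hstr; exact npref_asymm pref hp f v v hstr hstr
    · rw [h, hμv, e2] at hstr; exact npref_asymm pref hp v t t hstr hstr
    · rw [h, hμt, e3] at hstr; exact npref_asymm pref hp t f f hstr hstr
def eVotes (a0 a1 a2 : Fin 3) : Fin 3 → ℕ := fun c =>
  (if a0 = c then 1 else 0) + (if a1 = c then 1 else 0) + (if a2 = c then 1 else 0)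

def eF (a0 a1 a2 : Fin 3) : Fin 3 :=
  let vs := eVotes a0 a1 a2
  if (vs 1 < vs 0 ∨ vs 0 = vs 1) ∧ (vs 2 < vs 0 ∨ vs 0 = vs 2) then 0
  else if vs 0 < vs 1 ∧ (vs 2 < vs 1 ∨ vs 1 = vs 2) then 1
  else 2

def eμ (a0 a1 a2 : Fin 3) : Fin 3 → Fin 3 :=
  let f := eF a0 a1 a2
  let v := if f = 0 then a0 else if f = 1 then a1 else a2
  let t := if f ≠ 0 ∧ v ≠ 0 then 0 else if f ≠ 1 ∧ v ≠ 1 then 1 else 2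
  fun x => if x = f then v else if x = v then t else f

lemma npb_of_votes (pref : Fin 3 → Fin 3 → Fin 3 → Prop) (hp : StrictProfile pref)
    (a0 a1 a2 : Fin 3) (h00 : a0 ≠ 0) (h11 : a1 ≠ 1) (h22 : a2 ≠ 2)
    (h0 : nvote pref 0 = a0) (h1 : nvote pref 1 = a1) (h2 : nvote pref 2 = a2) :
    npb pref = eμ a0 a1 a2 := by
  have hvotes : ∀ c, nvotes pref c = eVotes a0 a1 a2 c := by
    intro c
    simp only [nvotes, Finset.card_filter, Fin.sum_univ_three, h0, h1, h2, eVotes]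
  have hcase : ∀ a0 a1 a2 : Fin 3, a0 ≠ 0 → a1 ≠ 1 → a2 ≠ 2 →
      (a0=1∧a1=0∧a2=0) ∨ (a0=1∧a1=0∧a2=1) ∨ (a0=1∧a1=2∧a2=0) ∨ (a0=1∧a1=2∧a2=1) ∨
      (a0=2∧a1=0∧a2=0) ∨ (a0=2∧a1=0∧a2=1) ∨ (a0=2∧a1=2∧a2=0) ∨ (a0=2∧a1=2∧a2=1) := by
    intro a0 a1 a2 x0 x1 x2
    fin_cases a0 <;> fin_cases a1 <;> fin_cases a2 <;> simp_all
  rcases hcase a0 a1 a2 h00 h11 h22 with hc|hc|hc|hc|hc|hc|hc|hc <;>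
      obtain ⟨rfl, rfl, rfl⟩ := hc
  · have hfe : pick (ndprio pref) Finset.univ = 0 := by
      apply pick_eq (ndprio_asymm pref) (Finset.mem_univ _)
      intro x _ hx
      fin_cases x <;>
        first
          | exact absurd rfl hx
          | (simp only [ndprio, hvotes]; decide)
    obtain ⟨e1, e2, e3⟩ := npb_closed pref hp 0 1 2 hfe h0 (by decide) (by decide) (by decide)
    funext x; fin_cases x <;>
      first
        | exact e1.trans (by decide)
        | exact e2.trans (by decide)
        | exact e3.trans (by decide)
  · have hfe : pick (ndprio pref) Finset.univ = 1 := by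
      apply pick_eq (ndprio_asymm pref) (Finset.mem_univ _)
      intro x _ hx
      fin_cases x <;>
        first
          | exact absurd rfl hx
          | (simp only [ndprio, hvotes]; decide)
    obtain ⟨e1, e2, e3⟩ := npb_closed pref hp 1 0 2 hfe h1 (by decide) (by decide) (by decide)
    funext x; fin_cases x <;>
      first
        | exact e1.trans (by decide)
        | exact e2.trans (by decide)
        | exact e3.trans (by decide)
  · have hfe : pick (ndprio pref) Finset.univ = 0 := by
      apply pick_eq (ndprio_asymm pref) (Finset.mem_univ _)
      intro x _ hx
      fin_cases x <;>
        first
          | exact absurd rfl hx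
          | (simp only [ndprio, hvotes]; decide)
    obtain ⟨e1, e2, e3⟩ := npb_closed pref hp 0 1 2 hfe h0 (by decide) (by decide) (by decide)
    funext x; fin_cases x <;>
      first
        | exact e1.trans (by decide)
        | exact e2.trans (by decide)
        | exact e3.trans (by decide)
  · have hfe : pick (ndprio pref) Finset.univ = 1 := by
      apply pick_eq (ndprio_asymm pref) (Finset.mem_univ _)
      intro x _ hx
      fin_cases x <;>
        first
          | exact absurd rfl hx
          | (simp only [ndprio, hvotes]; decide)
    obtain ⟨e1, e2, e3⟩ := npb_closed pref hp 1 2 0 hfe h1 (by decide) (by decide) (by decide)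
    funext x; fin_cases x <;>
      first
        | exact e1.trans (by decide)
        | exact e2.trans (by decide)
        | exact e3.trans (by decide)
  · have hfe : pick (ndprio pref) Finset.univ = 0 := by
      apply pick_eq (ndprio_asymm pref) (Finset.mem_univ _)
      intro x _ hx
      fin_cases x <;>
        first
          | exact absurd rfl hx
          | (simp only [ndprio, hvotes]; decide)
    obtain ⟨e1, e2, e3⟩ := npb_closed pref hp 0 2 1 hfe h0 (by decide) (by decide) (by decide)
    funext x; fin_cases x <;>
      first
        | exact e1.trans (by decide)
        | exact e2.trans (by decide)
        | exact e3.trans (by decide)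
  · have hfe : pick (ndprio pref) Finset.univ = 0 := by
      apply pick_eq (ndprio_asymm pref) (Finset.mem_univ _)
      intro x _ hx
      fin_cases x <;>
        first
          | exact absurd rfl hx
          | (simp only [ndprio, hvotes]; decide)
    obtain ⟨e1, e2, e3⟩ := npb_closed pref hp 0 2 1 hfe h0 (by decide) (by decide) (by decide)
    funext x; fin_cases x <;>
      first
        | exact e1.trans (by decide)
        | exact e2.trans (by decide)
        | exact e3.trans (by decide)
  · have hfe : pick (ndprio pref) Finset.univ = 2 := by
      apply pick_eq (ndprio_asymm pref) (Finset.mem_univ _)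
      intro x _ hx
      fin_cases x <;>
        first
          | exact absurd rfl hx
          | (simp only [ndprio, hvotes]; decide)
    obtain ⟨e1, e2, e3⟩ := npb_closed pref hp 2 0 1 hfe h2 (by decide) (by decide) (by decide)
    funext x; fin_cases x <;>
      first
        | exact e1.trans (by decide)
        | exact e2.trans (by decide)
        | exact e3.trans (by decide)
  · have hfe : pick (ndprio pref) Finset.univ = 2 := by
      apply pick_eq (ndprio_asymm pref) (Finset.mem_univ _)
      intro x _ hx
      fin_cases x <;>
        first
          | exact absurd rfl hx
          | (simp only [ndprio, hvotes]; decide)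
    obtain ⟨e1, e2, e3⟩ := npb_closed pref hp 2 1 0 hfe h2 (by decide) (by decide) (by decide)
    funext x; fin_cases x <;>
      first
        | exact e1.trans (by decide)
        | exact e2.trans (by decide)
        | exact e3.trans (by decide)
lemma keyμ : ∀ (V : Fin 3 → Fin 3) (i b : Fin 3), (∀ j, V j ≠ j) → b ≠ i →
    eμ (Function.update V i b 0) (Function.update V i b 1) (Function.update V i b 2) i
      = eμ (V 0) (V 1) (V 2) i ∨
    (eμ (V 0) (V 1) (V 2) i = V i ∧
     eμ (Function.update V i b 0) (Function.update V i b 1) (Function.update V i b 2) i ≠ i ∧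
     eμ (Function.update V i b 0) (Function.update V i b 1) (Function.update V i b 2) i ≠ V i) := by
  decide
lemma npb_part2 (pref : Fin 3 → Fin 3 → Fin 3 → Prop) (hp : StrictProfile pref)
    (i : Fin 3) (q : Fin 3 → Fin 3 → Prop) (hq : IsStrictTotalOrder (Fin 3) q) :
    npb pref i = npb (Function.update pref i q) i ∨
    pref i (npb pref i) (npb (Function.update pref i q) i) := by
  have hp' : StrictProfile (Function.update pref i q) := by
    intro j
    by_cases h : j = i
    · subst h; simpa using hq
    · rw [Function.update_of_ne h]; exact hp j
  have hvj : ∀ j, j ≠ i → nvote (Function.update pref i q) j = nvote pref j := by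
    intro j hj
    unfold nvote
    rw [Function.update_of_ne hj]
  have hVp : nvote (Function.update pref i q)
      = Function.update (nvote pref) i (nvote (Function.update pref i q) i) := by
    funext j
    by_cases h : j = i
    · subst h; rw [Function.update_self]
    · rw [Function.update_of_ne h, hvj j h]
  have e1 : npb pref = eμ (nvote pref 0) (nvote pref 1) (nvote pref 2) :=
    npb_of_votes pref hp _ _ _ (nvote_spec pref hp 0).1 (nvote_spec pref hp 1).1
      (nvote_spec pref hp 2).1 rfl rfl rfl
  have e2 : npb (Function.update pref i q)
      = eμ (nvote (Function.update pref i q) 0) (nvote (Function.update pref i q) 1)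
          (nvote (Function.update pref i q) 2) :=
    npb_of_votes _ hp' _ _ _ (nvote_spec _ hp' 0).1 (nvote_spec _ hp' 1).1
      (nvote_spec _ hp' 2).1 rfl rfl rfl
  rw [hVp] at e2
  have hder : ∀ j, nvote pref j ≠ j := fun j => (nvote_spec pref hp j).1
  have hb : nvote (Function.update pref i q) i ≠ i := (nvote_spec _ hp' i).1
  rcases keyμ (nvote pref) i (nvote (Function.update pref i q) i) hder hb with h | ⟨ho, h2, h3⟩
  · left; rw [e1, e2]; exact h.symm
  · right
    rw [e1, e2, ho]
    exact (nvote_spec pref hp i).2 _ h2 h3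


/-- For `n = 3`, the NPB Active Player Draft mechanism satisfies CE-efficiency (its
output at every strict profile is a derangement that is CE-efficient) and
strategy-proofness. -/
theorem npb_n3_cee_sp :
    (∀ pref : Fin 3 → Fin 3 → Fin 3 → Prop, StrictProfile pref →
      Function.Bijective (npb pref) ∧ (∀ i, npb pref i ≠ i) ∧
      CEEfficientAt pref (npb pref)) ∧
    (∀ pref : Fin 3 → Fin 3 → Fin 3 → Prop, StrictProfile pref →
      ∀ (i : Fin 3) (q : Fin 3 → Fin 3 → Prop), IsStrictTotalOrder (Fin 3) q →
        npb pref i = npb (Function.update pref i q) i ∨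
        pref i (npb pref i) (npb (Function.update pref i q) i)) := by
  exact ⟨npb_part1, npb_part2⟩
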